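/- arXiv:2407.04620 — 3 statements merged into one kernel-verified Lean document; each statement's English description precedes it below -/
import Mathlib

section
/- Let d, p be positive integers, let θ_K, θ_V, θ_Q be p×d real matrices, and let x_1, …, x_T ∈ ℝ^d be an input sequence. Define the self-supervised loss ℓ(W; x) = ‖W(θ_K x) − θ_V x‖² for p×p matrices W, and consider the TTT layer with linear inner model f(x; W) = Wx, initialization W_0 = 0, learning rate η = 1/2, and batch gradient descent update rule W_t = W_0 − η ∑_{s=1}^t ∇_W ℓ(W_0; x_s) (gradient with respect to the Frobenius inner product). Then for every t ∈ {1, …, T}, the output token z_t = f(θ_Q x_t; W_t) = W_t (θ_Q x_t) satisfies z_t = ∑_{s=1}^t (θ_V x_s) (θ_K x_s)ᵀ (θ_Q x_t), which is the output of linear attention with keys θ_K x_s, values θ_V x_s, and queries θ_Q x_t. -/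
/-!
Along the line `W₀ + tH` the loss `∑ᵢ ((W k)ᵢ - vᵢ)²` is a quadratic polynomial in `t` with
derivative `2 (W₀ k - v) ⬝ᵥ (H k) = trace ((2 (W₀ k - v) kᵀ)ᵀ H)` at `t = 0`, so the Frobenius
gradient is `2 (W₀ k - v) kᵀ`, which is `-2 v kᵀ` at `W₀ = 0`. One batch step with `η = 1/2`
therefore gives `W_t = ∑ₛ vₛ kₛᵀ`, and `W_t q_t` is the linear-attention output.
-/

open Matrix

attribute [local instance] Matrix.normedAddCommGroup Matrix.normedSpace

section FrobeniusGradient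

variable {m n : Type*} [Fintype m] [Fintype n]

def HasFrobeniusGradientAt (f : Matrix m n ℝ → ℝ) (G W₀ : Matrix m n ℝ) : Prop :=
  ∃ φ : Matrix m n ℝ →L[ℝ] ℝ, HasFDerivAt f φ W₀ ∧ ∀ H, φ H = trace (Gᵀ * H)

theorem Matrix.eq_of_trace_transpose_mul_eq [DecidableEq m] [DecidableEq n]
    {A B : Matrix m n ℝ} (h : ∀ H : Matrix m n ℝ, trace (Aᵀ * H) = trace (Bᵀ * H)) : A = B :=
  transpose_inj.mp (ext_iff_trace_mul_right.mpr h)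

theorem HasFrobeniusGradientAt.eq_of_hasLineDerivAt [DecidableEq m] [DecidableEq n]
    {f : Matrix m n ℝ → ℝ} {G G' W₀ : Matrix m n ℝ} (hG : HasFrobeniusGradientAt f G W₀)
    (hG' : ∀ H, HasLineDerivAt ℝ f (trace (G'ᵀ * H)) W₀ H) : G = G' := by
  obtain ⟨φ, hφ, hφG⟩ := hG
  exact eq_of_trace_transpose_mul_eq fun H => by
    rw [← hφG]
    exact (hφ.hasLineDerivAt H).unique (hG' H)

theorem Matrix.dotProduct_mulVec_eq_trace_transpose_vecMulVec_mul
    (r : m → ℝ) (k : n → ℝ) (H : Matrix m n ℝ) :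
    r ⬝ᵥ (H *ᵥ k) = trace ((vecMulVec r k)ᵀ * H) := by
  rw [transpose_vecMulVec, vecMulVec_mul, trace_vecMulVec, dotProduct_mulVec, dotProduct_comm]

theorem hasLineDerivAt_sum_sq_mulVec_sub (W₀ H : Matrix m n ℝ) (k : n → ℝ) (v : m → ℝ) :
    HasLineDerivAt ℝ (fun W : Matrix m n ℝ => ∑ i, ((W *ᵥ k) i - v i) ^ 2)
      (2 * ((W₀ *ᵥ k - v) ⬝ᵥ (H *ᵥ k))) W₀ H := by
  have hline : (fun t : ℝ => ∑ i, (((W₀ + t • H) *ᵥ k) i - v i) ^ 2)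
      = fun t => ∑ i, ((W₀ *ᵥ k - v) i + t * (H *ᵥ k) i) ^ 2 := by
    ext t
    refine Finset.sum_congr rfl fun i _ => ?_
    simp only [add_mulVec, smul_mulVec, Pi.add_apply, Pi.smul_apply, Pi.sub_apply, smul_eq_mul]
    ring
  have hderiv := HasDerivAt.fun_sum (u := Finset.univ) fun i _ =>
    (((hasDerivAt_id (0 : ℝ)).mul_const ((H *ᵥ k) i)).const_add ((W₀ *ᵥ k - v) i)).pow 2
  rw [HasLineDerivAt, hline]
  convert hderiv using 1
  · simp
  · simp only [dotProduct, Finset.mul_sum, id, zero_mul, add_zero, one_mul]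
    refine Finset.sum_congr rfl fun i _ => ?_
    ring

theorem HasFrobeniusGradientAt.eq_of_sum_sq_mulVec_sub [DecidableEq m] [DecidableEq n]
    {k : n → ℝ} {v : m → ℝ} {G W₀ : Matrix m n ℝ}
    (hG : HasFrobeniusGradientAt (fun W => ∑ i, ((W *ᵥ k) i - v i) ^ 2) G W₀) :
    G = (2 : ℝ) • vecMulVec (W₀ *ᵥ k - v) k :=
  hG.eq_of_hasLineDerivAt fun H => by
    rw [transpose_smul, smul_mul, trace_smul, smul_eq_mul,
      ← dotProduct_mulVec_eq_trace_transpose_vecMulVec_mul]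
    exact hasLineDerivAt_sum_sq_mulVec_sub W₀ H k v

end FrobeniusGradient

theorem stmt_0_general (d p T : ℕ)
    (θK θV θQ : Matrix (Fin p) (Fin d) ℝ)
    (x : ℕ → Fin d → ℝ)
    (G : ℕ → Matrix (Fin p) (Fin p) ℝ)
    (hG : ∀ s : ℕ, ∃ φ : Matrix (Fin p) (Fin p) ℝ →L[ℝ] ℝ,
      HasFDerivAt
        (fun W : Matrix (Fin p) (Fin p) ℝ =>
          ∑ i, (W.mulVec (θK.mulVec (x s)) i - θV.mulVec (x s) i) ^ 2)
        φ (0 : Matrix (Fin p) (Fin p) ℝ) ∧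
      ∀ H : Matrix (Fin p) (Fin p) ℝ, φ H = Matrix.trace ((G s)ᵀ * H))
    (W : ℕ → Matrix (Fin p) (Fin p) ℝ)
    (hW : ∀ t : ℕ, W t = (0 : Matrix (Fin p) (Fin p) ℝ)
      - (1 / 2 : ℝ) • ∑ s ∈ Finset.Icc 1 t, G s) :
    ∀ t : ℕ, 1 ≤ t → t ≤ T →
      (W t).mulVec (θQ.mulVec (x t)) =
        ∑ s ∈ Finset.Icc 1 t,
          (Matrix.vecMulVec (θV.mulVec (x s)) (θK.mulVec (x s))).mulVec
            (θQ.mulVec (x t)) := by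
  have hGs : ∀ s, G s = (-2 : ℝ) • vecMulVec (θV *ᵥ x s) (θK *ᵥ x s) := fun s => by
    simpa [neg_vecMulVec] using HasFrobeniusGradientAt.eq_of_sum_sq_mulVec_sub (hG s)
  intro t _ _
  rw [hW t, ← sum_mulVec]
  simp only [hGs, ← Finset.smul_sum, smul_smul, zero_sub]
  norm_num

/-- With the self-supervised loss `ℓ(W; x) = ‖W(θ_K x) − θ_V x‖²`,
initialization `W₀ = 0`, learning rate `η = 1/2`, and batch gradient descent update
`W_t = W₀ − η ∑_{s=1}^t ∇_W ℓ(W₀; x_s)` (Frobenius gradient `G s`), every output token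
`z_t = W_t (θ_Q x_t)` equals the linear-attention output
`∑_{s=1}^t (θ_V x_s)(θ_K x_s)ᵀ (θ_Q x_t)`. -/
theorem stmt_0 (d p T : ℕ) (hd : 0 < d) (hp : 0 < p)
    (θK θV θQ : Matrix (Fin p) (Fin d) ℝ)
    (x : ℕ → Fin d → ℝ)
    (G : ℕ → Matrix (Fin p) (Fin p) ℝ)
    (hG : ∀ s : ℕ, ∃ φ : Matrix (Fin p) (Fin p) ℝ →L[ℝ] ℝ,
      HasFDerivAt
        (fun W : Matrix (Fin p) (Fin p) ℝ =>
          ∑ i, (W.mulVec (θK.mulVec (x s)) i - θV.mulVec (x s) i) ^ 2)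
        φ (0 : Matrix (Fin p) (Fin p) ℝ) ∧
      ∀ H : Matrix (Fin p) (Fin p) ℝ, φ H = Matrix.trace ((G s)ᵀ * H))
    (W : ℕ → Matrix (Fin p) (Fin p) ℝ)
    (hW : ∀ t : ℕ, W t = (0 : Matrix (Fin p) (Fin p) ℝ)
      - (1 / 2 : ℝ) • ∑ s ∈ Finset.Icc 1 t, G s) :
    ∀ t : ℕ, 1 ≤ t → t ≤ T →
      (W t).mulVec (θQ.mulVec (x t)) =
        ∑ s ∈ Finset.Icc 1 t,
          (Matrix.vecMulVec (θV.mulVec (x s)) (θK.mulVec (x s))).mulVec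
            (θQ.mulVec (x t)) :=
  stmt_0_general d p T θK θV θQ x G hG W hW
end

section
/- Let x_1, …, x_b ∈ ℝ^d, X the d×b matrix with columns x_t, W_0 a d×d real matrix, and η ∈ ℝ. Define G_s = 2 (W_0 x_s − x_s) x_sᵀ, W_t = W_0 − η ∑_{s=1}^t G_s, and output tokens z_t = W_t x_t for t = 1, …, b. Then the d×b matrix Z with columns z_1, …, z_b satisfies Z = W_0 X − 2η Δ, where Δ = (W_0 X − X) · mask(Xᵀ X) and mask is the causal masking operator that keeps entry (s, t) of a b×b matrix when s ≤ t and zeroes it when s > t. Equivalently, z_t = W_0 x_t − 2η ∑_{s=1}^t (W_0 x_s − x_s)(x_sᵀ x_t) for each t. -/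
open Matrix

/-- The matrix whose `t`-th column is `x t`. -/
def colMatrix {α : Type*} {d b : ℕ} (x : Fin b → Fin d → α) : Matrix (Fin d) (Fin b) α :=
  Matrix.of fun i t => x t i

/-- The causal masking operator on `b×b` matrices: keeps entry `(s, t)` when `s ≤ t`
and sets it to `0` when `s > t`. -/
def causalMask {b : ℕ} (M : Matrix (Fin b) (Fin b) ℝ) : Matrix (Fin b) (Fin b) ℝ :=
  Matrix.of fun s t => if s ≤ t then M s t else 0

lemma sum_mulVec' {ι : Type*} {m n : ℕ} (s : Finset ι) (f : ι → Matrix (Fin m) (Fin n) ℝ)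
    (v : Fin n → ℝ) : (∑ i ∈ s, f i) *ᵥ v = ∑ i ∈ s, f i *ᵥ v := by
  ext j
  simp [Matrix.mulVec, dotProduct, Matrix.sum_apply, Finset.sum_mul]
  rw [Finset.sum_comm]

lemma vecMulVec_mulVec' {m n : ℕ} (u : Fin m → ℝ) (w v : Fin n → ℝ) :
    Matrix.vecMulVec u w *ᵥ v = (w ⬝ᵥ v) • u := by
  ext i
  simp only [Matrix.vecMulVec, Matrix.mulVec, dotProduct, Matrix.of_apply, Pi.smul_apply,
    smul_eq_mul, Finset.sum_mul]
  exact Finset.sum_congr rfl fun _ _ => by ring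

/-- dual form of mini-batch TTT with a linear model: with
`G_s = 2 (W₀ x_s − x_s) x_sᵀ`, `W_t = W₀ − η ∑_{s=1}^t G_s`, and `z_t = W_t x_t`, the
matrix `Z` with columns `z_1,…,z_b` satisfies `Z = W₀ X − 2η Δ` for
`Δ = (W₀ X − X) · mask(Xᵀ X)`; equivalently
`z_t = W₀ x_t − 2η ∑_{s=1}^t (W₀ x_s − x_s)(x_sᵀ x_t)` for each `t`. -/
theorem stmt_7 (b d : ℕ)
    (x : Fin b → Fin d → ℝ) (W0 : Matrix (Fin d) (Fin d) ℝ) (η : ℝ)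
    (G : Fin b → Matrix (Fin d) (Fin d) ℝ)
    (hG : ∀ s, G s = (2 : ℝ) • Matrix.vecMulVec (W0.mulVec (x s) - x s) (x s))
    (W : Fin b → Matrix (Fin d) (Fin d) ℝ)
    (hW : ∀ t, W t = W0 - η • ∑ s ∈ Finset.Iic t, G s)
    (z : Fin b → Fin d → ℝ)
    (hz : ∀ t, z t = (W t).mulVec (x t)) :
    colMatrix z
      = W0 * colMatrix x
        - (2 * η) • ((W0 * colMatrix x - colMatrix x) *
            causalMask ((colMatrix x)ᵀ * colMatrix x)) ∧
    ∀ t, z t = W0.mulVec (x t)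
      - (2 * η) • ∑ s ∈ Finset.Iic t, (x s ⬝ᵥ x t) • (W0.mulVec (x s) - x s) := by
  have key : ∀ t, z t = W0.mulVec (x t)
      - (2 * η) • ∑ s ∈ Finset.Iic t, (x s ⬝ᵥ x t) • (W0.mulVec (x s) - x s) := by
    intro t
    rw [hz, hW, Matrix.sub_mulVec, Matrix.smul_mulVec, sum_mulVec']
    congr 1
    have hterm : ∀ s, G s *ᵥ x t = (2 : ℝ) • ((x s ⬝ᵥ x t) • (W0 *ᵥ x s - x s)) := by
      intro s
      rw [hG, Matrix.smul_mulVec, vecMulVec_mulVec']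
    simp only [hterm]
    rw [← Finset.smul_sum, smul_smul, mul_comm]
  refine ⟨?_, key⟩
  ext i t
  simp only [colMatrix, causalMask, Matrix.sub_apply, Matrix.smul_apply, Matrix.mul_apply,
    Matrix.transpose_apply, Matrix.of_apply, smul_eq_mul]
  rw [key t]
  simp only [Pi.sub_apply, Pi.smul_apply, Finset.sum_apply, smul_eq_mul]
  refine congrArg₂ (· - ·) (by simp [Matrix.mulVec, dotProduct]) ?_
  refine congrArg (fun S => 2 * η * S) ?_
  rw [show Finset.Iic t = Finset.univ.filter (· ≤ t) from by ext s; simp, Finset.sum_filter]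
  refine Finset.sum_congr rfl fun s _ => ?_
  split
  · simp only [Matrix.mulVec, dotProduct, Pi.sub_apply]
    ring
  · ring
end

section
/- Let b, d, m, e be positive integers, η ∈ ℝ, let x̂_1, …, x̂_b ∈ ℝ^d, x̄_1, …, x̄_b ∈ ℝ^d, and d_1, …, d_b ∈ ℝ^m, with X̂, X̄ the d×b matrices and D the m×b matrix having these columns. Let W_0 be an m×d real matrix and define W_t = W_0 − η ∑_{s=1}^t d_s x̂_sᵀ for t = 1, …, b. Then the m×b matrix whose t-th column is W_t x̄_t equals W_0 X̄ − η · D · mask(X̂ᵀ X̄), where mask keeps entry (s, t) of a b×b matrix when s ≤ t and zeroes it when s > t. -/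
open Matrix

/-- per-layer dual-form identity: with `W_t = W₀ − η ∑_{s=1}^t d_s x̂_sᵀ`,
the matrix whose `t`-th column is `W_t x̄_t` equals `W₀ X̄ − η · D · mask(X̂ᵀ X̄)`. -/
theorem stmt_8 (b d m e : ℕ) (hb : 0 < b) (hd : 0 < d) (hm : 0 < m) (he : 0 < e)
    (η : ℝ)
    (xhat xbar : Fin b → Fin d → ℝ) (dvec : Fin b → Fin m → ℝ)
    (W0 : Matrix (Fin m) (Fin d) ℝ)
    (W : Fin b → Matrix (Fin m) (Fin d) ℝ)
    (hW : ∀ t, W t = W0 - η • ∑ s ∈ Finset.Iic t, Matrix.vecMulVec (dvec s) (xhat s)) :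
    colMatrix (fun t => (W t).mulVec (xbar t))
      = W0 * colMatrix xbar
        - η • (colMatrix dvec * causalMask ((colMatrix xhat)ᵀ * colMatrix xbar)) := by
  ext i t
  simp only [hW, colMatrix, causalMask, Matrix.mulVec, Matrix.mul_apply,
    Matrix.sub_apply, Matrix.smul_apply, Matrix.sum_apply, Matrix.vecMulVec_apply,
    Matrix.of_apply, Matrix.transpose_apply, dotProduct, smul_eq_mul, sub_mul,
    mul_ite, mul_zero]
  rw [Finset.sum_sub_distrib]
  congr 1
  rw [Finset.mul_sum]
  simp only [mul_ite, mul_zero]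
  rw [← Finset.sum_filter]
  have hf : Finset.filter (fun s => s ≤ t) Finset.univ = Finset.Iic t := by
    ext s; simp [Finset.mem_Iic]
  rw [hf]
  simp only [Finset.sum_mul, Finset.mul_sum]
  rw [Finset.sum_comm]
  exact Finset.sum_congr rfl fun s _ => Finset.sum_congr rfl fun j _ => by ring
end
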